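/- arXiv:1905.05658 — 2 statements merged into one kernel-verified Lean document; each statement's English description precedes it below -/
import Mathlib

section
/- Let $A$ be an $N\times N$ Hermitian positive semidefinite matrix with entries in $\frac{1}{m}\mathcal{O}_E$ for a positive integer $m$ and the ring of integers $\mathcal{O}_E$ of a finite Galois extension $E/\mathbb{Q}$, with $\|A\| \le b$ for some $b \ge 1$. Let $c$ be the lowest nonzero coefficient of the characteristic polynomial of $A$ (the product of the nonzero eigenvalues). Suppose for every $\tau \in \mathrm{Gal}(E/\mathbb{Q})$ the matrix $\tau(A)$ is also Hermitian positive semidefinite with norm at most $b$ and its product of nonzero eigenvalues is $\tau(c)$. Then $|c| \ge m^{-[E:\mathbb{Q}]N}\, b^{-([E:\mathbb{Q}]-1)N}$. -/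
open scoped BigOperators Classical ComplexOrder

/-!
Every conjugate `τ c` is the product of the nonzero eigenvalues of the positive semidefinite
matrix `τ A`, so `‖τ c‖ ≤ b ^ N`. The eigenvalues of `m • A` are roots of its characteristic
polynomial, which is monic with integral coefficients, so `m ^ N * c` is an algebraic integer.
Its norm `∏ τ, m ^ N * τ c` is therefore a nonzero rational integer, of absolute value at least
`1`; bounding every factor except `c` itself by `b ^ N` gives the claim.
-/

open Polynomial

namespace Matrix

variable {n : Type*} [Fintype n] [DecidableEq n]

theorem isRoot_charpoly_smul {R : Type*} [CommRing R] {B : Matrix n n R} {r : R}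
    (hr : B.charpoly.IsRoot r) (a : R) : (a • B).charpoly.IsRoot (a * r) := by
  rw [IsRoot, eval_charpoly, scalar_apply] at hr ⊢
  change (diagonal (a • fun _ => r) - a • B).det = 0
  rw [diagonal_smul, ← smul_sub, det_smul, hr, mul_zero]

theorem isIntegral_of_isRoot_charpoly {R A : Type*} [CommRing R] [CommRing A] [Algebra R A]
    {B : Matrix n n A} (hB : ∀ i j, IsIntegral R (B i j)) {μ : A}
    (hμ : B.charpoly.IsRoot μ) : IsIntegral R μ := by
  let B₀ : Matrix n n (integralClosure R A) := fun i j => ⟨B i j, hB i j⟩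
  have hB₀ : B = B₀.map (algebraMap (integralClosure R A) A) := rfl
  have : IsIntegral (integralClosure R A) μ := by
    refine ⟨B₀.charpoly, B₀.charpoly_monic, ?_⟩
    rwa [← eval_map, ← charpoly_map, ← hB₀]
  exact isIntegral_trans μ this

theorem IsHermitian.isRoot_charpoly_eigenvalues {𝕜 : Type*} [RCLike 𝕜] {M : Matrix n n 𝕜}
    (hM : M.IsHermitian) (i : n) : M.charpoly.IsRoot (hM.eigenvalues i : 𝕜) := by
  rw [hM.charpoly_eq, IsRoot, eval_prod]
  exact Finset.prod_eq_zero (Finset.mem_univ i) (by simp)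

theorem IsHermitian.isIntegral_pow_mul_prod_nonzero_eigenvalues {M : Matrix n n ℂ}
    (hM : M.IsHermitian) {m : ℕ} (hint : ∀ i j, IsIntegral ℤ ((m : ℂ) * M i j)) :
    IsIntegral ℤ ((m : ℂ) ^ Fintype.card n *
      ∏ i ∈ Finset.univ.filter (fun i => hM.eigenvalues i ≠ 0), (hM.eigenvalues i : ℂ)) := by
  set S := Finset.univ.filter (fun i => hM.eigenvalues i ≠ 0)
  have hS : S.card ≤ Fintype.card n := Finset.card_filter_le _ _
  have hscaled : ∀ i, IsIntegral ℤ ((m : ℂ) * hM.eigenvalues i) := fun i =>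
    isIntegral_of_isRoot_charpoly (B := (m : ℂ) • M) (by simpa using hint)
      (isRoot_charpoly_smul (hM.isRoot_charpoly_eigenvalues i) _)
  have hsplit : (m : ℂ) ^ Fintype.card n * ∏ i ∈ S, (hM.eigenvalues i : ℂ) =
      (m : ℂ) ^ (Fintype.card n - S.card) * ∏ i ∈ S, ((m : ℂ) * hM.eigenvalues i) := by
    rw [Finset.prod_mul_distrib, Finset.prod_const, ← mul_assoc, ← pow_add,
      Nat.sub_add_cancel hS]
  rw [hsplit]
  exact ((isIntegral_natCast m).pow _).mul (IsIntegral.prod _ fun i _ => hscaled i)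

theorem PosSemidef.norm_prod_nonzero_eigenvalues_le {𝕜 : Type*} [RCLike 𝕜] {M : Matrix n n 𝕜}
    (hM : M.PosSemidef) {b : ℝ} (hb : 1 ≤ b) (hle : ∀ i, hM.1.eigenvalues i ≤ b) :
    ‖∏ i ∈ Finset.univ.filter (fun i => hM.1.eigenvalues i ≠ 0), (hM.1.eigenvalues i : 𝕜)‖ ≤
      b ^ Fintype.card n := by
  set S := Finset.univ.filter (fun i => hM.1.eigenvalues i ≠ 0)
  calc ‖∏ i ∈ S, (hM.1.eigenvalues i : 𝕜)‖ = ∏ i ∈ S, hM.1.eigenvalues i := by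
        rw [norm_prod]
        exact Finset.prod_congr rfl fun i _ => by
          rw [RCLike.norm_ofReal, abs_of_nonneg (hM.eigenvalues_nonneg i)]
    _ ≤ ∏ _i ∈ S, b := Finset.prod_le_prod (fun i _ => hM.eigenvalues_nonneg i) fun i _ => hle i
    _ = b ^ S.card := Finset.prod_const b
    _ ≤ b ^ Fintype.card n := pow_le_pow_right₀ hb (Finset.card_filter_le _ _)

end Matrix

section Galois

variable {K : Type*} [Field K] [Algebra ℚ K] [FiniteDimensional ℚ K] [IsGalois ℚ K] (φ : K →+* ℂ)

theorem one_le_prod_norm_automorphisms {x : K} (hx : IsIntegral ℤ x) (hx0 : x ≠ 0) :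
    1 ≤ ∏ σ : Gal(K/ℚ), ‖φ (σ x)‖ := by
  obtain ⟨z, hz⟩ := IsIntegrallyClosed.isIntegral_iff.mp (Algebra.isIntegral_norm ℚ hx)
  have hz0 : z ≠ 0 := by
    rintro rfl
    exact Algebra.norm_ne_zero_iff.mpr hx0 (by rw [← hz, map_zero])
  calc (1 : ℝ) ≤ |(z : ℝ)| := by exact_mod_cast Int.one_le_abs hz0
    _ = ∏ σ : Gal(K/ℚ), ‖φ (σ x)‖ := by
      rw [← norm_prod, ← map_prod, ← Algebra.norm_eq_prod_automorphisms, ← hz]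
      simp

theorem prod_norm_automorphisms_le {x : K} {B : ℝ} (hB : ∀ σ : Gal(K/ℚ), ‖φ (σ x)‖ ≤ B) :
    ∏ σ : Gal(K/ℚ), ‖φ (σ x)‖ ≤ ‖φ x‖ * B ^ (Module.finrank ℚ K - 1) := by
  rw [← Finset.mul_prod_erase _ _ (Finset.mem_univ 1), AlgEquiv.one_apply]
  gcongr
  calc ∏ σ ∈ Finset.univ.erase 1, ‖φ (σ x)‖ ≤ ∏ _σ ∈ Finset.univ.erase (1 : Gal(K/ℚ)), B :=
        Finset.prod_le_prod (fun _ _ => norm_nonneg _) fun σ _ => hB σ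
    _ = B ^ (Module.finrank ℚ K - 1) := by
      rw [Finset.prod_const, Finset.card_erase_of_mem (Finset.mem_univ 1), Finset.card_univ,
        ← Nat.card_eq_fintype_card, IsGalois.card_aut_eq_finrank]

end Galois

/-- **Lower bound for the product of nonzero eigenvalues of an algebraic
positive semidefinite matrix.**
Let `E ⊆ ℂ` be a finite Galois extension of `ℚ`, `A` an `N × N` matrix with
entries in `(1/m)·𝒪_E` (`m` a positive integer) which is Hermitian positive
semidefinite with all eigenvalues at most `b` (`b ≥ 1`), and suppose that for
every `τ ∈ Gal(E/ℚ)` the entrywise conjugate matrix `τ(A)` is also Hermitian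
positive semidefinite with eigenvalues at most `b`, with product of nonzero
eigenvalues `τ(c)`, where `c ≠ 0` is the lowest nonzero coefficient of the
characteristic polynomial of `A` (the product of the nonzero eigenvalues of
`A`).  Then `|c| ≥ m^(-[E:ℚ]·N) · b^(-([E:ℚ]-1)·N)`. -/
theorem lowest_charpoly_coefficient_bound
    (E : IntermediateField ℚ ℂ) [FiniteDimensional ℚ E] [IsGalois ℚ E]
    (N m : ℕ) (hm : 0 < m) (b : ℝ) (hb : 1 ≤ b)
    (A : Matrix (Fin N) (Fin N) E)
    (hint : ∀ i j, IsIntegral ℤ ((m : E) * A i j))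
    (hpsd : ∀ τ : E ≃ₐ[ℚ] E,
      (A.map fun x => ((τ x : E) : ℂ)).PosSemidef)
    (hnorm : ∀ (τ : E ≃ₐ[ℚ] E) (i : Fin N), (hpsd τ).1.eigenvalues i ≤ b)
    (c : E) (hc0 : c ≠ 0)
    (hτc : ∀ τ : E ≃ₐ[ℚ] E, ((τ c : E) : ℂ) =
      ∏ i ∈ Finset.univ.filter (fun i => (hpsd τ).1.eigenvalues i ≠ 0),
        ((hpsd τ).1.eigenvalues i : ℂ)) :
    ((m : ℝ) ^ (Module.finrank ℚ E * N))⁻¹ *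
        (b ^ ((Module.finrank ℚ E - 1) * N))⁻¹ ≤ ‖(c : ℂ)‖ := by
  set d := Module.finrank ℚ E
  let φ : E →+* ℂ := E.val
  have hcint : IsIntegral ℤ ((m : E) ^ N * c) := by
    have h := (hpsd 1).1.isIntegral_pow_mul_prod_nonzero_eigenvalues (m := m)
      fun i j => by simpa using (hint i j).map E.val
    rw [Fintype.card_fin, ← hτc 1] at h
    exact (isIntegral_algHom_iff (E.val.restrictScalars ℤ) E.val.injective).mp (by simpa using h)
  have hconj : ∀ τ : E ≃ₐ[ℚ] E, ‖φ (τ ((m : E) ^ N * c))‖ = (m : ℝ) ^ N * ‖φ (τ c)‖ := by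
    intro τ
    simp [φ]
  have hconj_le : ∀ τ : E ≃ₐ[ℚ] E, ‖φ (τ c)‖ ≤ b ^ N := fun τ => by
    simpa [φ, ← hτc τ] using (hpsd τ).norm_prod_nonzero_eigenvalues_le hb (hnorm τ)
  have key : 1 ≤ (m : ℝ) ^ (d * N) * (‖(c : ℂ)‖ * (b ^ N) ^ (d - 1)) := by
    calc (1 : ℝ) ≤ ∏ τ : E ≃ₐ[ℚ] E, ‖φ (τ ((m : E) ^ N * c))‖ :=
          one_le_prod_norm_automorphisms φ hcint (mul_ne_zero (by simp [hm.ne']) hc0)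
      _ = (m : ℝ) ^ (d * N) * ∏ τ : E ≃ₐ[ℚ] E, ‖φ (τ c)‖ := by
          rw [Finset.prod_congr rfl fun τ _ => hconj τ, Finset.prod_mul_distrib, Finset.prod_const,
            Finset.card_univ, ← Nat.card_eq_fintype_card, IsGalois.card_aut_eq_finrank, ← pow_mul,
            mul_comm N]
      _ ≤ (m : ℝ) ^ (d * N) * (‖(c : ℂ)‖ * (b ^ N) ^ (d - 1)) := by
          gcongr
          exact prod_norm_automorphisms_le φ hconj_le
  rw [← pow_mul, mul_comm N] at key
  rw [← mul_inv, inv_le_iff_one_le_mul₀ (by positivity)]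
  linarith
end

section
/- Let $\Gamma$ be a group and $g \in \Gamma$ an element with infinite conjugacy class, and let $(N_n)_n$ be a descending chain of finite index normal subgroups of $\Gamma$ with trivial intersection. Then $\lim_{n\to\infty} \frac{|C_{\Gamma/N_n}(gN_n)|}{|\Gamma : N_n|} = 0$. -/
/-!
By orbit–stabilizer, `|C_G(x)| / |G|` is the reciprocal of the size of the conjugacy class of `x`
(and is `0` when `G` is infinite), so it is at most `1 / k` as soon as the class has `k` distinct
elements. Any `k` distinct conjugates of `g` in `Γ` stay distinct in `Γ ⧸ N n` for large `n`,
because their pairwise quotients are nontrivial and hence eventually leave the chain `N n`.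
-/

open Filter

theorem Group.nat_card_conjugatesOf_mul_nat_card_centralizer {G : Type*} [Group G] (x : G) :
    Nat.card (conjugatesOf x) * Nat.card (Subgroup.centralizer {x}) = Nat.card G := by
  have horbit : conjugatesOf x = MulAction.orbit (ConjAct G) x := by
    ext y
    exact isConj_comm.trans ConjAct.mem_orbit_conjAct.symm
  rw [horbit, Subgroup.nat_card_centralizer_nat_card_stabilizer, ← Nat.card_prod,
    Nat.card_congr (MulAction.orbitProdStabilizerEquivGroup (ConjAct G) x)]
  rfl

theorem Group.nat_card_centralizer_div_nat_card_mul_card_le_one {G : Type*} [Group G] {x : G}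
    (t : Finset G) (ht : ↑t ⊆ conjugatesOf x) :
    (Nat.card (Subgroup.centralizer {x}) : ℝ) / Nat.card G * t.card ≤ 1 := by
  rw [← Group.nat_card_conjugatesOf_mul_nat_card_centralizer x, Nat.cast_mul]
  rcases (conjugatesOf x).finite_or_infinite with hfin | hinf
  · have hle : (t.card : ℝ) ≤ Nat.card (conjugatesOf x) := by
      rw [← Set.ncard_coe_finset, Nat.card_coe_set_eq]
      exact_mod_cast Set.ncard_le_ncard ht hfin
    rcases eq_or_ne (Nat.card (Subgroup.centralizer {x}) : ℝ) 0 with h0 | h0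
    · simp [h0]
    · rw [div_mul_cancel_right₀ h0, ← div_eq_inv_mul]
      exact div_le_one_of_le₀ hle (Nat.cast_nonneg _)
  · simp [hinf.to_subtype]

theorem Subgroup.eventually_notMem_of_antitone {G ι : Type*} [Group G] [Preorder ι]
    {N : ι → Subgroup G} (hN : Antitone N) (hbot : ⨅ i, N i = ⊥) {a : G} (ha : a ≠ 1) :
    ∀ᶠ i in atTop, a ∉ N i := by
  obtain ⟨j, hj⟩ : ∃ j, a ∉ N j := by
    by_contra! h
    exact ha (by simpa [hbot] using Subgroup.mem_iInf.mpr h)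
  filter_upwards [eventually_ge_atTop j] with i hij hai using hj (hN hij hai)

theorem Subgroup.eventually_injOn_mk_of_antitone {G ι : Type*} [Group G] [Preorder ι]
    {N : ι → Subgroup G} (hN : Antitone N) (hbot : ⨅ i, N i = ⊥) (t : Finset G) :
    ∀ᶠ i in atTop, Set.InjOn (QuotientGroup.mk : G → G ⧸ N i) t := by
  have hpairs : ∀ᶠ i in atTop, ∀ a ∈ t, ∀ b ∈ t, a ≠ b → a⁻¹ * b ∉ N i := by
    simp only [eventually_all_finset, eventually_imp_distrib_left]
    intro a _ b _ hab
    exact Subgroup.eventually_notMem_of_antitone hN hbot (mt inv_mul_eq_one.mp hab)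
  filter_upwards [hpairs] with i hi a ha b hb hab
  by_contra hne
  exact hi a ha b hb hne (QuotientGroup.eq.mp hab)

theorem centralizer_quotient_vanishing_general {Γ : Type*} [Group Γ] (g : Γ)
    (hg : Set.Infinite {x : Γ | IsConj g x})
    (N : ℕ → Subgroup Γ) [hnorm : ∀ n, (N n).Normal]
    (hdesc : ∀ n, N (n + 1) ≤ N n)
    (hint : (⨅ n, N n) = ⊥) :
    Tendsto (fun n =>
        (Nat.card (Subgroup.centralizer {(g : Γ ⧸ N n)} : Subgroup (Γ ⧸ N n)) : ℝ)
          / ((N n).index : ℝ))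
      atTop (nhds 0) := by
  classical
  refine tendsto_order.2 ⟨fun a ha => .of_forall fun n => ha.trans_le (by positivity),
    fun ε hε => ?_⟩
  obtain ⟨k, hk⟩ := exists_nat_one_div_lt hε
  obtain ⟨t, hts, htk⟩ := hg.exists_subset_card_eq (k + 1)
  filter_upwards [Subgroup.eventually_injOn_mk_of_antitone (antitone_nat_of_succ_le hdesc) hint t]
    with n hinj
  have himage : ↑(t.image (QuotientGroup.mk : Γ → Γ ⧸ N n)) ⊆ conjugatesOf (g : Γ ⧸ N n) := by
    rw [Finset.coe_image]
    rintro _ ⟨x, hx, rfl⟩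
    exact (QuotientGroup.mk' (N n)).map_isConj (hts hx)
  have hbound := Group.nat_card_centralizer_div_nat_card_mul_card_le_one _ himage
  rw [Finset.card_image_of_injOn hinj, htk, Nat.cast_add_one, ← le_div_iff₀ (by positivity)]
    at hbound
  exact hbound.trans_lt hk

/-- **Vanishing of normalized centralizers along a chain.**
Let `Γ` be a group and `g ∈ Γ` an element with infinite conjugacy class, and
let `(N n)` be a descending chain of finite index normal subgroups of `Γ`
with trivial intersection.  Then
`|C_{Γ/Nₙ}(g Nₙ)| / |Γ : Nₙ| → 0` as `n → ∞`. -/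
theorem centralizer_quotient_vanishing {Γ : Type*} [Group Γ] (g : Γ)
    (hg : Set.Infinite {x : Γ | IsConj g x})
    (N : ℕ → Subgroup Γ) [hnorm : ∀ n, (N n).Normal]
    (hfi : ∀ n, (N n).index ≠ 0)
    (hdesc : ∀ n, N (n + 1) ≤ N n)
    (hint : (⨅ n, N n) = ⊥) :
    Tendsto (fun n =>
        (Nat.card (Subgroup.centralizer {(g : Γ ⧸ N n)} : Subgroup (Γ ⧸ N n)) : ℝ)
          / ((N n).index : ℝ))
      atTop (nhds 0) :=
  centralizer_quotient_vanishing_general g hg N (hnorm := hnorm) hdesc hint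
end
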